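/- arXiv:1609.01631 — 3 statements merged into one kernel-verified Lean document; each statement's English description precedes it below -/
import Mathlib

section
/- Let (X,T) be a dynamical system on a compact metric space with T continuous. If there exists a fixed point p of T such that p belongs to the omega-limit set of every point x in X, then (X,T) is proximal, i.e., every pair of points x,y in X satisfies liminf_{n→∞} d(T^n x, T^n y) = 0. -/
open Filter

/-- The omega-limit set of `x` under iteration of `T`. -/
def omegaLimitSet {X : Type*} [MetricSpace X] (T : X → X) (x : X) : Set X :=
  ⋂ n : ℕ, closure {y | ∃ k ≥ n, T^[k] x = y}

/-!
By compactness there is a uniform time `N` within which every orbit enters a given open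
neighbourhood `U` of `p`, and by continuity the first `N` iterates keep a small neighbourhood `V`
of `p` inside `U`. Once the orbit of `x` is in `V`, wait until the orbit of `y` enters `U`: both
orbits are then in `U` at the same time. So `(p, p)` is a cluster point of the orbit of `(x, y)`,
and `0 = dist p p` a cluster point of the nonnegative sequence `dist (T^[n] x) (T^[n] y)`.
-/

open Topology Function

theorem mem_omegaLimitSet_iff_mapClusterPt {X : Type*} [MetricSpace X] {T : X → X} {x p : X} :
    p ∈ omegaLimitSet T x ↔ MapClusterPt p atTop (fun k ↦ T^[k] x) := by
  rw [mapClusterPt_atTop_iff_forall_mem_closure]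
  simp only [omegaLimitSet, Set.mem_iInter, Set.image, Set.mem_Ici]

section Iterates

variable {X : Type*} [TopologicalSpace X] {T : X → X}

theorem exists_bound_forall_exists_iterate_mem [CompactSpace X] (hT : Continuous T)
    {U : Set X} (hU : IsOpen U) (hvisit : ∀ z, ∃ k, T^[k] z ∈ U) :
    ∃ N, ∀ z, ∃ k ≤ N, T^[k] z ∈ U := by
  have hcover : Set.univ ⊆ ⋃ k, T^[k] ⁻¹' U := fun z _ ↦ Set.mem_iUnion.2 (hvisit z)
  obtain ⟨s, hs⟩ := isCompact_univ.elim_finite_subcover _ (fun k ↦ hU.preimage (hT.iterate k))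
    hcover
  refine ⟨s.sup id, fun z ↦ ?_⟩
  obtain ⟨k, hk, hz⟩ := Set.mem_iUnion₂.1 (hs (Set.mem_univ z))
  exact ⟨k, s.le_sup (f := id) hk, hz⟩

theorem Function.IsFixedPt.eventually_forall_iterate_mem (hT : Continuous T) {p : X}
    (hp : IsFixedPt T p) {U : Set X} (hU : U ∈ 𝓝 p) (N : ℕ) :
    ∀ᶠ w in 𝓝 p, ∀ j ≤ N, T^[j] w ∈ U :=
  (Set.finite_Iic N).eventually_all.2 fun j _ ↦ (hT.iterate j).tendsto' p p (hp.iterate j) hU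

theorem mapClusterPt_prod_iterate [CompactSpace X] (hT : Continuous T) {p : X}
    (hp : IsFixedPt T p) (hω : ∀ x, MapClusterPt p atTop (fun k ↦ T^[k] x)) (x y : X) :
    MapClusterPt (p, p) atTop (fun n ↦ (T^[n] x, T^[n] y)) := by
  have hbasis : (𝓝 (p, p)).HasBasis (fun U ↦ p ∈ U ∧ IsOpen U) (fun U ↦ U ×ˢ U) := by
    rw [nhds_prod_eq]
    exact (nhds_basis_opens p).prod_self
  rw [hbasis.mapClusterPt_iff_frequently]
  rintro U ⟨hpU, hUo⟩
  have hvisit : ∀ z, ∃ k, T^[k] z ∈ U := fun z ↦ ((hω z).frequently (hUo.mem_nhds hpU)).exists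
  obtain ⟨N, hN⟩ := exists_bound_forall_exists_iterate_mem hT hUo hvisit
  have hV := hp.eventually_forall_iterate_mem hT (hUo.mem_nhds hpU) N
  refine frequently_atTop.2 fun n₀ ↦ ?_
  obtain ⟨m, hm, hxV⟩ := frequently_atTop.1 ((hω x).frequently hV) n₀
  obtain ⟨k, hk, hyU⟩ := hN (T^[m] y)
  refine ⟨k + m, by omega, ?_⟩
  rw [iterate_add_apply, iterate_add_apply]
  exact ⟨hxV k hk, hyU⟩

end Iterates

theorem liminf_eq_zero_of_nonneg_of_mapClusterPt {ι : Type*} {l : Filter ι} {u : ι → ℝ}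
    (hu : ∀ i, 0 ≤ u i) (h0 : MapClusterPt 0 l u) : liminf u l = 0 := by
  have hcobdd : IsCoboundedUnder (· ≥ ·) l u :=
    IsCobounded.of_frequently_le (l := (1 : ℝ)) <| frequently_map.2 <|
      (h0.frequently (Iio_mem_nhds one_pos)).mono fun _ h ↦ h.le
  exact le_antisymm (h0.liminf_le (isBoundedUnder_of ⟨0, hu⟩))
    (le_liminf_of_le hcobdd (Eventually.of_forall hu))

/-- If a fixed point `p` belongs to the omega-limit set of every point,
then the system is proximal. -/
theorem fixed_point_in_all_omega_limits_implies_proximal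
    {X : Type*} [MetricSpace X] [CompactSpace X]
    (T : X → X) (hT : Continuous T)
    (p : X) (hp : T p = p)
    (hω : ∀ x : X, p ∈ omegaLimitSet T x) :
    ∀ x y : X, Filter.liminf (fun n : ℕ => dist (T^[n] x) (T^[n] y)) atTop = 0 := by
  intro x y
  have hpair := mapClusterPt_prod_iterate hT hp
    (fun z ↦ mem_omegaLimitSet_iff_mapClusterPt.1 (hω z)) x y
  have hdist : MapClusterPt 0 atTop (fun n ↦ dist (T^[n] x) (T^[n] y)) := by
    simpa only [dist_self, comp_def] using hpair.continuousAt_comp continuous_dist.continuousAt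
  exact liminf_eq_zero_of_nonneg_of_mapClusterPt (fun _ ↦ dist_nonneg) hdist
end

section
/- Let (X,T) be a proximal dynamical system on a nonempty compact metric space. Then T has a fixed point p, and {p} is the unique minimal subset of (X,T). -/
/-!
Proximality of `x` and `T x` makes the displacement `y ↦ dist y (T y)` arbitrarily small along
the orbit of `x`, so its minimum over any compact invariant set containing `x` is `0`: every
minimal set contains a fixed point and is therefore that point. Two fixed points are proximal,
hence equal.
-/

open Filter

/-- A system is proximal if every pair of points is proximal. -/
def ProximalSystem {X : Type*} [MetricSpace X] (T : X → X) : Prop :=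
  ∀ x y : X, Filter.liminf (fun n : ℕ => dist (T^[n] x) (T^[n] y)) atTop = 0

/-- A minimal set: nonempty, closed, invariant, with no proper nonempty closed
invariant subset. -/
def IsMinimalSet {X : Type*} [TopologicalSpace X] (T : X → X) (M : Set X) : Prop :=
  M.Nonempty ∧ IsClosed M ∧ T '' M ⊆ M ∧
    ∀ M' ⊆ M, M'.Nonempty → IsClosed M' → T '' M' ⊆ M' → M' = M

namespace ProximalSystem

variable {X : Type*} [MetricSpace X] {T : X → X}

-- Boundedness makes the `liminf` genuine: for an unbounded sequence, `liminf` in `ℝ` is junk.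
theorem exists_dist_iterate_lt [BoundedSpace X] (h : ProximalSystem T) (x y : X) {ε : ℝ}
    (hε : 0 < ε) : ∃ n, dist (T^[n] x) (T^[n] y) < ε := by
  have hcobdd : IsCoboundedUnder (· ≥ ·) atTop fun n : ℕ => dist (T^[n] x) (T^[n] y) :=
    isCoboundedUnder_ge_of_le atTop fun _ =>
      Metric.dist_le_diam_of_mem BoundedSpace.bounded_univ trivial trivial
  exact (frequently_lt_of_liminf_lt hcobdd ((h x y).symm ▸ hε)).exists

theorem eq_of_isFixedPt (h : ProximalSystem T) {x y : X} (hx : Function.IsFixedPt T x)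
    (hy : Function.IsFixedPt T y) : x = y := by
  have hxy := h x y
  simp only [Function.iterate_fixed hx, Function.iterate_fixed hy, liminf_const] at hxy
  exact dist_eq_zero.mp hxy

theorem exists_isFixedPt_mem [BoundedSpace X] (h : ProximalSystem T) {M : Set X}
    (hM : IsCompact M) (hne : M.Nonempty) (hTM : Set.MapsTo T M M) (hT : ContinuousOn T M) :
    ∃ z ∈ M, Function.IsFixedPt T z := by
  obtain ⟨x, hx⟩ := hne
  obtain ⟨z, hzM, hmin⟩ := hM.exists_isMinOn ⟨x, hx⟩
    (continuous_dist.comp_continuousOn (continuousOn_id.prodMk hT))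
  refine ⟨z, hzM, (dist_eq_zero.mp (le_antisymm ?_ dist_nonneg)).symm⟩
  refine le_of_forall_pos_lt_add fun ε hε => ?_
  obtain ⟨n, hn⟩ := h.exists_dist_iterate_lt x (T x) hε
  rw [← Function.iterate_succ_apply, Function.iterate_succ_apply'] at hn
  calc dist z (T z) ≤ dist (T^[n] x) (T (T^[n] x)) := isMinOn_iff.mp hmin _ (hTM.iterate n hx)
    _ < 0 + ε := by rwa [zero_add]

end ProximalSystem

/-- a proximal system has a fixed point `p`, and `{p}` is the
unique minimal subset. -/
theorem proximal_unique_minimal_fixed_point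
    {X : Type*} [MetricSpace X] [CompactSpace X] [Nonempty X]
    (T : X → X) (hT : Continuous T) (h : ProximalSystem T) :
    ∃ p : X, T p = p ∧ ∀ M : Set X, IsMinimalSet T M → M = {p} := by
  obtain ⟨p, -, hp⟩ := h.exists_isFixedPt_mem isCompact_univ Set.univ_nonempty
    (Set.mapsTo_univ T _) hT.continuousOn
  refine ⟨p, hp, fun M ⟨hne, hclosed, hinv, hmin⟩ => ?_⟩
  obtain ⟨z, hzM, hz⟩ := h.exists_isFixedPt_mem hclosed.isCompact hne
    (Set.mapsTo_iff_image_subset.mpr hinv) hT.continuousOn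
  have hM : {z} = M := hmin {z} (Set.singleton_subset_iff.mpr hzM) (Set.singleton_nonempty z)
    isClosed_singleton (by rw [Set.image_singleton, hz])
  rw [← hM, h.eq_of_isFixedPt hz hp]
end

section
/- Let G = ⟨φ_i⟩ be a sequence of graph homomorphisms φ_i: (V_{i+1}, E_{i+1}) → (V_i, E_i) between finite directed graphs, where each graph is edge-surjective (every vertex has an incoming and an outgoing edge) and each φ_i is bidirectional. Let V_G = {x ∈ ∏_{i≥0} V_i : φ_i(x_{i+1}) = x_i for all i} with the product topology (each V_i discrete), and let E_G = {(x,y) ∈ V_G × V_G : (x_i, y_i) ∈ E_i for all i}. Then V_G is a compact metrizable zero-dimensional (totally disconnected) space and the relation E_G is the graph of a homeomorphism of V_G. -/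
/-!
Bidirectionality says that all out-neighbours (resp. in-neighbours) of a vertex of level `i + 1`
have the same image in level `i`. Hence for a point `x` of the inverse limit, the vertex
`φ i w` with `w` any out-neighbour of `x (i + 1)` depends only on `x`; these vertices form the
unique point `y` with `(x i, y i) ∈ E i` for all `i`, and `y i` depends only on `x (i + 1)`, so
`x ↦ y` is continuous. The same construction for the reversed graphs gives its inverse.
-/

namespace GraphCover

variable {V : ℕ → Type*}

abbrev InverseLimit (φ : ∀ i, V (i + 1) → V i) : Type _ :=
  {x : ∀ i, V i // ∀ i, φ i (x (i + 1)) = x i}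

section Topology

variable [∀ i, TopologicalSpace (V i)] {φ : ∀ i, V (i + 1) → V i}

theorem isClosed_setOf_inverseLimit [∀ i, T2Space (V i)] (hφ : ∀ i, Continuous (φ i)) :
    IsClosed {x : ∀ i, V i | ∀ i, φ i (x (i + 1)) = x i} := by
  rw [Set.ofPred_forall]
  exact isClosed_iInter fun i =>
    isClosed_eq ((hφ i).comp (continuous_apply _)) (continuous_apply i)

theorem compactSpace_inverseLimit [∀ i, T2Space (V i)] [∀ i, CompactSpace (V i)]
    (hφ : ∀ i, Continuous (φ i)) : CompactSpace (InverseLimit φ) :=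
  isCompact_iff_compactSpace.mp (isClosed_setOf_inverseLimit hφ).isCompact

end Topology

variable (E : ∀ i, Set (V i × V i)) (φ : ∀ i, V (i + 1) → V i)

def reverse (i : ℕ) : Set (V i × V i) :=
  Prod.swap ⁻¹' E i

def MapsEdges : Prop :=
  ∀ i, ∀ u v : V (i + 1), (u, v) ∈ E (i + 1) → (φ i u, φ i v) ∈ E i

def OutBidirectional : Prop :=
  ∀ i, ∀ u v v' : V (i + 1), (u, v) ∈ E (i + 1) → (u, v') ∈ E (i + 1) → φ i v = φ i v'

variable {E φ}

theorem MapsEdges.reverse (hhom : MapsEdges E φ) : MapsEdges (reverse E) φ :=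
  fun i u v => hhom i v u

variable (hout : ∀ i, ∀ v : V (i + 1), ∃ w, (v, w) ∈ E (i + 1))

variable (E φ) in
noncomputable def successor (x : ∀ i, V i) (i : ℕ) : V i :=
  φ i (hout i (x (i + 1))).choose

theorem successor_eq_of_mem (hbd : OutBidirectional E φ) {x : ∀ i, V i} {i : ℕ}
    {w : V (i + 1)} (hw : (x (i + 1), w) ∈ E (i + 1)) : successor E φ hout x i = φ i w :=
  hbd i _ _ _ (hout i (x (i + 1))).choose_spec hw

theorem pair_successor_mem (hhom : MapsEdges E φ) (x : InverseLimit φ) (i : ℕ) :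
    (x.1 i, successor E φ hout x.1 i) ∈ E i := by
  simpa only [successor, x.2 i] using hhom i _ _ (hout i (x.1 (i + 1))).choose_spec

theorem successor_mem_inverseLimit (hhom : MapsEdges E φ) (hbd : OutBidirectional E φ)
    (x : InverseLimit φ) (i : ℕ) :
    φ i (successor E φ hout x.1 (i + 1)) = successor E φ hout x.1 i :=
  (successor_eq_of_mem hout hbd (pair_successor_mem hout hhom x (i + 1))).symm

theorem forall_mem_iff_successor_eq (hhom : MapsEdges E φ) (hbd : OutBidirectional E φ)
    (x y : InverseLimit φ) : (∀ i, (x.1 i, y.1 i) ∈ E i) ↔ successor E φ hout x.1 = y.1 := by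
  refine ⟨fun hxy => funext fun i => ?_, fun h => h ▸ pair_successor_mem hout hhom x⟩
  rw [successor_eq_of_mem hout hbd (hxy (i + 1)), y.2 i]

theorem continuous_successor [∀ i, TopologicalSpace (V i)] [∀ i, DiscreteTopology (V i)] :
    Continuous (successor E φ hout) :=
  continuous_pi fun i => (continuous_of_discreteTopology
    (f := fun v => φ i (hout i v).choose)).comp (continuous_apply _)

variable [∀ i, TopologicalSpace (V i)] [∀ i, DiscreteTopology (V i)]
  (hin : ∀ i, ∀ v : V (i + 1), ∃ u, (u, v) ∈ E (i + 1))
  (hhom : MapsEdges E φ) (hbd₁ : OutBidirectional E φ) (hbd₂ : OutBidirectional (reverse E) φ)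

noncomputable def successorHomeomorph : InverseLimit φ ≃ₜ InverseLimit φ where
  toFun x := ⟨successor E φ hout x.1, successor_mem_inverseLimit hout hhom hbd₁ x⟩
  invFun y := ⟨successor (reverse E) φ hin y.1,
    successor_mem_inverseLimit (E := reverse E) hin hhom.reverse hbd₂ y⟩
  left_inv x := Subtype.ext <|
    (forall_mem_iff_successor_eq (E := reverse E) hin hhom.reverse hbd₂ _ x).1
      (pair_successor_mem hout hhom x)
  right_inv y := Subtype.ext <|
    (forall_mem_iff_successor_eq hout hhom hbd₁ _ y).1
      (pair_successor_mem (E := reverse E) hin hhom.reverse y)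
  continuous_toFun := ((continuous_successor hout).comp continuous_subtype_val).subtype_mk _
  continuous_invFun :=
    ((continuous_successor (E := reverse E) hin).comp continuous_subtype_val).subtype_mk _

theorem forall_mem_iff_successorHomeomorph_eq (x y : InverseLimit φ) :
    (∀ i, (x.1 i, y.1 i) ∈ E i) ↔ successorHomeomorph hout hin hhom hbd₁ hbd₂ x = y :=
  (forall_mem_iff_successor_eq hout hhom hbd₁ x y).trans
    ⟨fun h => Subtype.ext h, congrArg Subtype.val⟩

end GraphCover

open GraphCover in
/-- the inverse limit of a sequence of bidirectional covers of
edge-surjective finite graphs is a compact metrizable zero-dimensional space,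
and the induced edge relation is the graph of a homeomorphism. -/
theorem graph_cover_inverse_limit
    (V : ℕ → Type) [∀ i, Fintype (V i)]
    [∀ i, TopologicalSpace (V i)] [∀ i, DiscreteTopology (V i)]
    (E : ∀ i, Set (V i × V i))
    -- edge-surjectivity: every vertex has an incoming and an outgoing edge
    (hes : ∀ i, ∀ v : V i, (∃ u, (u, v) ∈ E i) ∧ (∃ w, (v, w) ∈ E i))
    (φ : ∀ i, V (i + 1) → V i)
    -- each φ i is a graph homomorphism
    (hhom : ∀ i, ∀ u v : V (i + 1), (u, v) ∈ E (i + 1) → (φ i u, φ i v) ∈ E i)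
    -- bidirectionality
    (hbd₁ : ∀ i, ∀ u v v' : V (i + 1), (u, v) ∈ E (i + 1) → (u, v') ∈ E (i + 1) →
      φ i v = φ i v')
    (hbd₂ : ∀ i, ∀ w w' u : V (i + 1), (w, u) ∈ E (i + 1) → (w', u) ∈ E (i + 1) →
      φ i w = φ i w') :
    CompactSpace {x : ∀ i, V i // ∀ i, φ i (x (i + 1)) = x i} ∧
    TopologicalSpace.MetrizableSpace {x : ∀ i, V i // ∀ i, φ i (x (i + 1)) = x i} ∧
    TotallyDisconnectedSpace {x : ∀ i, V i // ∀ i, φ i (x (i + 1)) = x i} ∧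
    ∃ h : {x : ∀ i, V i // ∀ i, φ i (x (i + 1)) = x i} ≃ₜ
          {x : ∀ i, V i // ∀ i, φ i (x (i + 1)) = x i},
      ∀ x y : {x : ∀ i, V i // ∀ i, φ i (x (i + 1)) = x i},
        (∀ i, (x.1 i, y.1 i) ∈ E i) ↔ h x = y := by
  have hout : ∀ i, ∀ v : V (i + 1), ∃ w, (v, w) ∈ E (i + 1) := fun i v => (hes (i + 1) v).2
  have hin : ∀ i, ∀ v : V (i + 1), ∃ u, (u, v) ∈ E (i + 1) := fun i v => (hes (i + 1) v).1
  have hbd₂' : OutBidirectional (reverse E) φ := fun i u v v' => hbd₂ i v v' u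
  exact ⟨compactSpace_inverseLimit fun _ => continuous_of_discreteTopology,
    TopologicalSpace.MetrizableSpace.subtype _, inferInstance,
    successorHomeomorph hout hin hhom hbd₁ hbd₂',
    forall_mem_iff_successorHomeomorph_eq hout hin hhom hbd₁ hbd₂'⟩
end
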